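/- arXiv:1702.05303 — 4 statements merged into one kernel-verified Lean document; each statement's English description precedes it below -/
import Mathlib

section
/- Let T be a tree, u and v adjacent vertices, and suppose v minimizes ww_T over V(T). Let T_v and T_u be the components of T − uv containing v and u respectively, and let n_{vu}(v) = |V(T_v)|, n_{vu}(u) = |V(T_u)|. Then n_{vu}(v) + w_{T_v}(v) ≥ n_{vu}(u) + w_{T_u}(u), with equality if and only if u also minimizes ww_T over V(T). -/
open Finset
open scoped Classical

/-- Local hyper-Wiener function: `ww G v = Σ_u (d(u,v)² + d(u,v))`. -/
noncomputable def ww {V : Type*} [Fintype V] (G : SimpleGraph V) (v : V) : ℕ :=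
  ∑ u : V, ((G.dist u v) ^ 2 + G.dist u v)

/-!
Deleting the edge `uv` of a tree splits it into the component `T_v` of `v` and the component
`T_u` of `u`, and moving from `v` to `u` lengthens every distance to a vertex of `T_v` by one
and shortens every distance to a vertex of `T_u` by one. Since `(d + 1)² + (d + 1) - (d² + d)
= 2 (d + 1)`, this gives the identity
`ww(u) + 2 (n(u) + w_{T_u}(u)) = ww(v) + 2 (n(v) + w_{T_v}(v))`,
from which both the inequality and its equality case follow by the minimality of `ww(v)`.
-/

theorem Finset.sum_succ_sq_add_succ {ι : Type*} (s : Finset ι) (f : ι → ℕ) :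
    ∑ i ∈ s, ((f i + 1) ^ 2 + (f i + 1)) = ∑ i ∈ s, (f i ^ 2 + f i) + 2 * (#s + ∑ i ∈ s, f i) :=
  calc ∑ i ∈ s, ((f i + 1) ^ 2 + (f i + 1)) = ∑ i ∈ s, ((f i ^ 2 + f i) + 2 + 2 * f i) :=
        sum_congr rfl fun _ _ => by ring
    _ = _ := by simp only [sum_add_distrib, sum_const, smul_eq_mul, ← mul_sum]; ring

namespace SimpleGraph

variable {V : Type*} {G : SimpleGraph V} {u v p : V}

lemma IsAcyclic.dist_eq_length_of_isPath (hG : G.IsAcyclic) {w : G.Walk u v} (hw : w.IsPath) :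
    G.dist u v = w.length := by
  obtain ⟨q, hq, hql⟩ := w.reachable.exists_path_of_dist
  obtain rfl : q = w := congrArg Subtype.val ((hG.subsingleton_path _ _).elim ⟨q, hq⟩ ⟨w, hw⟩)
  exact hql.symm

lemma Reachable.reachable_deleteEdges_or (h : G.Reachable u p) :
    (G.deleteEdges {s(u, v)}).Reachable u p ∨ (G.deleteEdges {s(u, v)}).Reachable v p := by
  rw [reachable_iff_reflTransGen] at h
  induction h with
  | refl => exact .inl .rfl
  | @tail b c _ hbc ih =>
    by_cases he : s(b, c) = s(u, v)
    · rcases Sym2.eq_iff.1 he with ⟨-, rfl⟩ | ⟨-, rfl⟩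
      · exact .inr .rfl
      · exact .inl .rfl
    · have hbc' : (G.deleteEdges {s(u, v)}).Adj b c := by simp [hbc, he]
      exact ih.imp (·.trans hbc'.reachable) (·.trans hbc'.reachable)

lemma IsAcyclic.not_reachable_deleteEdges (hG : G.IsAcyclic) (huv : G.Adj u v) :
    ¬ (G.deleteEdges {s(u, v)}).Reachable u v :=
  isBridge_iff.1 (isAcyclic_iff_forall_adj_isBridge.1 hG huv)

lemma IsAcyclic.dist_eq_of_reachable_deleteEdges (hG : G.IsAcyclic) (huv : G.Adj u v)
    (hp : (G.deleteEdges {s(u, v)}).Reachable v p) :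
    G.dist v p = (G.deleteEdges {s(u, v)}).dist v p ∧ G.dist u p = G.dist v p + 1 := by
  obtain ⟨q, hq, hql⟩ := hp.exists_path_of_dist
  have hu : u ∉ q.support := fun hu =>
    hG.not_reachable_deleteEdges huv (q.takeUntil u hu).reachable.symm
  have hq' : (q.mapLe (deleteEdges_le _)).IsPath := hq.mapLe _
  have hdv : G.dist v p = q.length := by
    rw [hG.dist_eq_length_of_isPath hq', Walk.length_mapLe]
  have hdu : G.dist u p = q.length + 1 := by
    rw [hG.dist_eq_length_of_isPath (w := .cons huv (q.mapLe (deleteEdges_le _))) (by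
      simpa [Walk.cons_isPath_iff, Walk.support_mapLe_eq_support] using ⟨hq, hu⟩)]
    simp
  exact ⟨hdv.trans hql, hdv ▸ hdu⟩

section Fintype

variable [Fintype V]

/-- The quantity `n(v) + w_{T_v}(v)`, for `T_v` the component of `v` in `G`. -/
noncomputable def componentWeight (G : SimpleGraph V) [DecidableRel G.Adj] (v : V) : ℕ :=
  #{p | G.Reachable v p} + ∑ p ∈ {p | G.Reachable v p}, G.dist v p

lemma IsAcyclic.sum_dist_sq_add_dist_of_adj (hG : G.IsAcyclic) (huv : G.Adj u v) :
    ∑ p ∈ {p | (G.deleteEdges {s(u, v)}).Reachable v p}, (G.dist u p ^ 2 + G.dist u p) =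
      ∑ p ∈ {p | (G.deleteEdges {s(u, v)}).Reachable v p}, (G.dist v p ^ 2 + G.dist v p) +
        2 * componentWeight (G.deleteEdges {s(u, v)}) v := by
  set S : Finset V := {p | (G.deleteEdges {s(u, v)}).Reachable v p}
  have hd (p : V) (hp : p ∈ S) := hG.dist_eq_of_reachable_deleteEdges huv (mem_filter.1 hp).2
  calc ∑ p ∈ S, (G.dist u p ^ 2 + G.dist u p)
      = ∑ p ∈ S, ((G.dist v p + 1) ^ 2 + (G.dist v p + 1)) :=
        sum_congr rfl fun p hp => by rw [(hd p hp).2]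
    _ = ∑ p ∈ S, (G.dist v p ^ 2 + G.dist v p) + 2 * (#S + ∑ p ∈ S, G.dist v p) :=
        sum_succ_sq_add_succ _ _
    _ = _ := by rw [sum_congr rfl fun p hp => (hd p hp).1]; rfl

lemma IsTree.ww_eq_sum_add_sum (hG : G.IsTree) (huv : G.Adj u v) (x : V) :
    ww G x = ∑ p ∈ {p | (G.deleteEdges {s(u, v)}).Reachable v p}, (G.dist x p ^ 2 + G.dist x p) +
      ∑ p ∈ {p | (G.deleteEdges {s(u, v)}).Reachable u p}, (G.dist x p ^ 2 + G.dist x p) := by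
  have hsides : univ.filter (fun p => (G.deleteEdges {s(u, v)}).Reachable u p) =
      univ.filter (fun p => ¬ (G.deleteEdges {s(u, v)}).Reachable v p) :=
    filter_congr fun p _ =>
      ⟨fun hu hv => hG.isAcyclic.not_reachable_deleteEdges huv (hu.trans hv.symm),
        ((hG.connected u p).reachable_deleteEdges_or).resolve_right⟩
  rw [hsides, sum_filter_add_sum_filter_not, ww]
  exact sum_congr rfl fun p _ => by rw [dist_comm]

theorem IsTree.ww_add_two_mul_componentWeight (hG : G.IsTree) (huv : G.Adj u v) :
    ww G u + 2 * componentWeight (G.deleteEdges {s(u, v)}) u =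
      ww G v + 2 * componentWeight (G.deleteEdges {s(u, v)}) v := by
  have hside_v := hG.isAcyclic.sum_dist_sq_add_dist_of_adj huv
  have hside_u := hG.isAcyclic.sum_dist_sq_add_dist_of_adj huv.symm
  rw [Sym2.eq_swap] at hside_u
  rw [hG.ww_eq_sum_add_sum huv u, hG.ww_eq_sum_add_sum huv v]
  omega

end Fintype

end SimpleGraph

theorem stmt4 {V : Type*} [Fintype V] (T : SimpleGraph V) (hT : T.IsTree)
    (u v : V) (huv : T.Adj u v) (hv : ∀ x, ww T v ≤ ww T x) :
    ((Finset.univ.filter (fun p => (T.deleteEdges {s(u,v)}).Reachable v p)).card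
        + ∑ p ∈ Finset.univ.filter (fun p => (T.deleteEdges {s(u,v)}).Reachable v p),
            (T.deleteEdges {s(u,v)}).dist v p
      ≥ (Finset.univ.filter (fun p => (T.deleteEdges {s(u,v)}).Reachable u p)).card
        + ∑ p ∈ Finset.univ.filter (fun p => (T.deleteEdges {s(u,v)}).Reachable u p),
            (T.deleteEdges {s(u,v)}).dist u p) ∧
    (((Finset.univ.filter (fun p => (T.deleteEdges {s(u,v)}).Reachable v p)).card
        + ∑ p ∈ Finset.univ.filter (fun p => (T.deleteEdges {s(u,v)}).Reachable v p),
            (T.deleteEdges {s(u,v)}).dist v p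
      = (Finset.univ.filter (fun p => (T.deleteEdges {s(u,v)}).Reachable u p)).card
        + ∑ p ∈ Finset.univ.filter (fun p => (T.deleteEdges {s(u,v)}).Reachable u p),
            (T.deleteEdges {s(u,v)}).dist u p)
      ↔ (∀ x, ww T u ≤ ww T x)) := by
  have key := hT.ww_add_two_mul_componentWeight huv
  show SimpleGraph.componentWeight _ v ≥ SimpleGraph.componentWeight _ u ∧
    (SimpleGraph.componentWeight _ v = SimpleGraph.componentWeight _ u ↔ _)
  have hvu := hv u
  exact ⟨by omega, fun h x => by have := hv x; omega, fun h => by have := h v; omega⟩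
end

section
/- For any tree T of odd order n with v ∈ C_w(T) (hyper-centroid) and u ∈ C(T) (centroid), the minimum distance between a vertex of C_w(T) and a vertex of C(T) is at most ⌊(n−1)/8⌋. -/
open Finset
open scoped Classical

/-- Local Wiener (distance) function: `w G v = Σ_u d(u,v)`. -/
noncomputable def wW {V : Type*} [Fintype V] (G : SimpleGraph V) (v : V) : ℕ :=
  ∑ u : V, G.dist u v

/-
Let `v` minimise `ww`, `u` minimise `wW`, `k = d(v, u) ≥ 1`, and let `w`, `x` be the neighbours of
`v` and `u` on the `v`–`u` path. As `u` is a centroid, the branch `B` at `u` of the edge `ux` holds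
at least half of the `n` vertices. Comparing `ww v ≤ ww w` vertex by vertex gives
`∑_{z on w's side} d(z, v) ≤ ∑_{z on v's side} (d(z, v) + 1)`, and the right-hand side is at most
`1 + ⋯ + c` for the `c` vertices on `v`'s side, since that side is star-shaped around `v`. The
side of `w` contains `B`, at distance at least `k` from `v`, and the `k - 1` inner vertices of the
path, so the left-hand side is at least `(|B| - 1) + k |B| + k (k - 1) / 2`. Together with
`|B| + (k - 1) + c ≤ n`, these inequalities force `8 k + 1 ≤ n`.
-/

theorem Finset.sum_le_sum_range_card {α : Type*} {s : Finset α} {f : α → ℕ}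
    (h : ∀ a ∈ s, ∀ t ≤ f a, ∃ b ∈ s, f b = t) : ∑ a ∈ s, f a ≤ ∑ i ∈ range #s, i := by
  induction s using Finset.induction_on_max_value f with
  | empty => simp
  | insert a s has hmax ih =>
    have hfa : f a ≤ #s := by
      have hsub : range (f a + 1) ⊆ (insert a s).image f := fun t ht ↦ by
        obtain ⟨b, hb, rfl⟩ := h a (mem_insert_self a s) t (Nat.lt_succ_iff.mp (mem_range.mp ht))
        exact mem_image_of_mem f hb
      simpa [card_insert_of_notMem has] using (card_le_card hsub).trans card_image_le
    have hs : ∀ b ∈ s, ∀ t ≤ f b, ∃ c ∈ s, f c = t := fun b hb t ht ↦ by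
      obtain ⟨c, hc, rfl⟩ := h b (mem_insert_of_mem hb) t ht
      rcases mem_insert.mp hc with rfl | hc
      · exact ⟨b, hb, le_antisymm (hmax b hb) ht⟩
      · exact ⟨c, hc, rfl⟩
    rw [sum_insert has, card_insert_of_notMem has, sum_range_succ]
    have := ih hs
    omega

-- `n` is the order of the tree, `k = d(v, u)`, `b` and `c` are the sizes of the branches at `u`
-- and at `v` pointing away from each other, `s = ∑_{i<k} i` and `t = ∑_{i≤c} i`.
theorem eight_mul_add_one_le_of_branch_bounds {n b c k s t : ℕ} (hn : Odd n) (hk : 1 ≤ k)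
    (hs : s * 2 = k * (k - 1)) (ht : t * 2 = (c + 1) * c) (hb : n ≤ 2 * b)
    (hbc : b + (k - 1) + c ≤ n) (hsum : b + b * k + s ≤ t + 1) : 8 * k + 1 ≤ n := by
  obtain ⟨m, rfl⟩ := hn
  by_contra! h
  have h₁ : k + c ≤ b := by omega
  have h₂ : b + c ≤ 7 * k := by omega
  have h₃ : 2 * b + 2 * b * k + k * k ≤ (c + 1) * c + k + 2 := by
    obtain ⟨j, rfl⟩ := Nat.exists_eq_add_of_le' hk
    simp only [Nat.add_sub_cancel] at hs
    nlinarith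
  -- `c (c + 1)` is bounded via `c ≤ b - k` if `b ≤ 4 k`, and via `c ≤ 7 k - b` otherwise
  rcases le_total b (4 * k) with h | h <;> nlinarith

namespace SimpleGraph

variable {V : Type*} {G : SimpleGraph V}

theorem Walk.dist_add_dist_of_mem_support {a b y : V} {p : G.Walk a b}
    (hp : p.length = G.dist a b) (hy : y ∈ p.support) :
    G.dist a y + G.dist y b = G.dist a b := by
  rw [← length_eq_dist_of_subwalk hp (p.isSubwalk_takeUntil hy),
    ← length_eq_dist_of_subwalk hp (p.isSubwalk_dropUntil hy), ← length_append, take_spec, hp]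

theorem Reachable.exists_dist_eq_of_le {a b : V} (h : G.Reachable a b) {i : ℕ}
    (hi : i ≤ G.dist a b) : ∃ y, G.dist a y = i ∧ G.dist y b = G.dist a b - i := by
  obtain ⟨p, hp⟩ := h.exists_walk_length_eq_dist
  refine ⟨p.getVert i, ?_, ?_⟩
  · rw [← length_eq_dist_of_subwalk hp (p.isSubwalk_take i), Walk.take_length]
    omega
  · rw [← length_eq_dist_of_subwalk hp (p.isSubwalk_drop i), Walk.drop_length, hp]

theorem IsTree.length_eq_dist_of_isPath (hG : G.IsTree) {a b : V} {p : G.Walk a b}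
    (hp : p.IsPath) : p.length = G.dist a b := by
  obtain ⟨q, hq, hql⟩ := hG.connected.exists_path_of_dist a b
  have hpq : (⟨p, hp⟩ : G.Path a b) = ⟨q, hq⟩ := (hG.isAcyclic.subsingleton_path a b).elim _ _
  rw [← hql, Subtype.mk.inj hpq]

theorem Connected.card_le_sum_dist_add_one (hG : G.Connected) (s : Finset V) (u : V) :
    #s ≤ ∑ z ∈ s, G.dist z u + 1 :=
  calc #s ≤ #(s.erase u) + 1 := Nat.le_add_of_sub_le pred_card_le_card_erase
    _ = ∑ _z ∈ s.erase u, 1 + 1 := by rw [card_eq_sum_ones]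
    _ ≤ ∑ z ∈ s.erase u, G.dist z u + 1 := by
      gcongr with z hz
      exact hG.pos_dist_of_ne (ne_of_mem_erase hz)
    _ ≤ ∑ z ∈ s, G.dist z u + 1 := by
      gcongr
      exact erase_subset u s

variable [Fintype V]

-- For an edge `xy` of a tree, this is the branch at `x`: the component of `x` in `G - xy`.
noncomputable def closerTo (G : SimpleGraph V) (x y : V) : Finset V :=
  univ.filter fun z ↦ G.dist z x < G.dist z y

theorem mem_closerTo {x y z : V} : z ∈ G.closerTo x y ↔ G.dist z x < G.dist z y := by
  simp [closerTo]

theorem dist_eq_dist_add_one_of_mem_closerTo {x y z : V} (hxy : G.Adj x y)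
    (hz : z ∈ G.closerTo x y) : G.dist z y = G.dist z x + 1 := by
  have := mem_closerTo.mp hz
  rcases hxy.diff_dist_adj (u := z) with h | h | h <;> omega

theorem IsTree.compl_closerTo (hG : G.IsTree) {x y : V} (hxy : G.Adj x y) :
    (G.closerTo x y)ᶜ = G.closerTo y x := by
  ext z
  have := hG.dist_ne_of_adj z hxy
  simp only [mem_compl, mem_closerTo]
  omega

theorem IsTree.dist_eq_of_mem_closerTo (hG : G.IsTree) {x y z b : V} (hxy : G.Adj x y)
    (hz : z ∈ G.closerTo x y) (hb : b ∈ G.closerTo y x) :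
    G.dist z b = G.dist z x + 1 + G.dist y b := by
  have hzy := dist_eq_dist_add_one_of_mem_closerTo hxy hz
  have hbx := dist_eq_dist_add_one_of_mem_closerTo hxy.symm hb
  obtain ⟨p, hp, hpl⟩ := hG.connected.exists_path_of_dist z x
  obtain ⟨q, hq, hql⟩ := hG.connected.exists_path_of_dist y b
  -- a common vertex `t` of `p` and `q` would be closer to `y` than to `x` and vice versa
  have hdisj : p.support.Disjoint q.support := fun t htp htq ↦ by
    have h₁ := Walk.dist_add_dist_of_mem_support hpl htp
    have h₂ := Walk.dist_add_dist_of_mem_support hql htq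
    have h₃ := hG.connected.dist_triangle (u := z) (v := t) (w := y)
    have h₄ := hG.connected.dist_triangle (u := b) (v := t) (w := x)
    have := dist_comm (G := G) (u := t) (v := y)
    have := dist_comm (G := G) (u := b) (v := t)
    have := dist_comm (G := G) (u := b) (v := y)
    omega
  have hpath : (p.append (q.cons hxy)).IsPath := by
    rw [Walk.isPath_def, Walk.support_append, Walk.support_cons, List.tail_cons]
    exact List.nodup_append.mpr
      ⟨hp.support_nodup, hq.support_nodup, fun a ha b hb h ↦ hdisj ha (h ▸ hb)⟩
  rw [← hG.length_eq_dist_of_isPath hpath, Walk.length_append, Walk.length_cons, hpl, hql]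
  ring

theorem Connected.exists_mem_closerTo_dist_eq (hG : G.Connected) {x y z : V}
    (hz : z ∈ G.closerTo x y) {t : ℕ} (ht : t ≤ G.dist z x) :
    ∃ w ∈ G.closerTo x y, G.dist w x = t := by
  obtain ⟨w, hxw, hwz⟩ := (hG x z).exists_dist_eq_of_le (dist_comm (G := G) ▸ ht)
  refine ⟨w, mem_closerTo.mpr ?_, dist_comm (G := G) ▸ hxw⟩
  have := mem_closerTo.mp hz
  have := hG.dist_triangle (u := z) (v := w) (w := y)
  have := dist_comm (G := G) (u := z) (v := w)
  have := dist_comm (G := G) (u := z) (v := x)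
  have := dist_comm (G := G) (u := w) (v := x)
  omega

theorem Connected.sum_dist_closerTo_le (hG : G.Connected) (x y : V) :
    ∑ z ∈ G.closerTo x y, G.dist z x ≤ ∑ i ∈ range #(G.closerTo x y), i :=
  sum_le_sum_range_card fun _ hz _ ht ↦ hG.exists_mem_closerTo_dist_eq hz ht

theorem IsTree.sum_comp_dist_add_sum_closerTo (hG : G.IsTree) {x y : V} (hxy : G.Adj x y)
    (F D : ℕ → ℕ) (hFD : ∀ d, F (d + 1) = F d + D d) :
    ∑ z, F (G.dist z y) + ∑ z ∈ G.closerTo y x, D (G.dist z y) =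
      ∑ z, F (G.dist z x) + ∑ z ∈ G.closerTo x y, D (G.dist z x) := by
  have h₁ : ∑ z ∈ G.closerTo x y, F (G.dist z y) =
      ∑ z ∈ G.closerTo x y, (F (G.dist z x) + D (G.dist z x)) :=
    sum_congr rfl fun z hz ↦ by rw [dist_eq_dist_add_one_of_mem_closerTo hxy hz, hFD]
  have h₂ : ∑ z ∈ G.closerTo y x, F (G.dist z x) =
      ∑ z ∈ G.closerTo y x, (F (G.dist z y) + D (G.dist z y)) :=
    sum_congr rfl fun z hz ↦ by rw [dist_eq_dist_add_one_of_mem_closerTo hxy.symm hz, hFD]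
  rw [← sum_add_sum_compl (G.closerTo x y),
    ← sum_add_sum_compl (G.closerTo x y) (F <| G.dist · x), hG.compl_closerTo hxy, h₁, h₂,
    sum_add_distrib, sum_add_distrib]
  ring

theorem IsTree.card_le_two_mul_card_closerTo (hG : G.IsTree) {u x : V} (hux : G.Adj u x)
    (hu : ∀ y, wW G u ≤ wW G y) : Fintype.card V ≤ 2 * #(G.closerTo u x) := by
  have htransfer := hG.sum_comp_dist_add_sum_closerTo hux id (fun _ ↦ 1) fun _ ↦ rfl
  have hcard := card_add_card_compl (G.closerTo u x)
  simp only [id, sum_const, smul_eq_mul, mul_one] at htransfer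
  rw [hG.compl_closerTo hux] at hcard
  have := hu x
  unfold wW at this
  omega

theorem IsTree.sum_dist_closerTo_le_of_isMin (hG : G.IsTree) {v w : V} (hvw : G.Adj v w)
    (hv : ∀ y, ww G v ≤ ww G y) :
    ∑ z ∈ G.closerTo w v, G.dist z v ≤ ∑ i ∈ range (#(G.closerTo v w) + 1), i := by
  have htransfer := hG.sum_comp_dist_add_sum_closerTo hvw (fun d ↦ d ^ 2 + d)
    (fun d ↦ 2 * (d + 1)) fun d ↦ by ring
  have hw : ∑ z ∈ G.closerTo w v, 2 * (G.dist z w + 1) =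
      2 * ∑ z ∈ G.closerTo w v, G.dist z v := by
    rw [mul_sum]
    exact sum_congr rfl fun z hz ↦ by rw [dist_eq_dist_add_one_of_mem_closerTo hvw.symm hz]
  have hle : ∑ z ∈ G.closerTo v w, (G.dist z v + 1) ≤
      ∑ i ∈ range (#(G.closerTo v w) + 1), i := by
    rw [sum_add_distrib, sum_range_succ, sum_const, smul_eq_mul, mul_one]
    gcongr
    exact hG.connected.sum_dist_closerTo_le v w
  have := hv w
  unfold ww at this
  rw [hw, ← mul_sum] at htransfer
  omega

section Geodesic

variable {u v w x : V}

theorem IsTree.dist_eq_dist_add_dist_of_mem_closerTo (hG : G.IsTree) (hux : G.Adj u x)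
    (hxv : G.dist x v + 1 = G.dist u v) {z : V} (hz : z ∈ G.closerTo u x) :
    G.dist z v = G.dist z u + G.dist u v := by
  have hv : v ∈ G.closerTo x u := mem_closerTo.mpr <| by
    rw [dist_comm (u := v), dist_comm (u := v)]
    omega
  rw [hG.dist_eq_of_mem_closerTo hux hz hv, ← hxv]
  ring

theorem IsTree.closerTo_subset_closerTo (hG : G.IsTree) (hwu : G.dist w u + 1 = G.dist v u)
    (hux : G.Adj u x) (hxv : G.dist x v + 1 = G.dist u v) :
    G.closerTo u x ⊆ G.closerTo w v := fun z hz ↦ by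
  have := hG.dist_eq_dist_add_dist_of_mem_closerTo hux hxv hz
  have := hG.connected.dist_triangle (u := z) (v := u) (w := w)
  have := dist_comm (G := G) (u := u) (v := w)
  have := dist_comm (G := G) (u := u) (v := v)
  exact mem_closerTo.mpr (by omega)

theorem IsTree.Ico_subset_image_dist (hG : G.IsTree) (hvw : G.Adj v w)
    (hwu : G.dist w u + 1 = G.dist v u) (hux : G.Adj u x) (hxv : G.dist x v + 1 = G.dist u v) :
    Ico 1 (G.dist v u) ⊆ (G.closerTo w v \ G.closerTo u x).image (G.dist · v) := fun i hi ↦ by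
  obtain ⟨hi₁, hi₂⟩ := mem_Ico.mp hi
  obtain ⟨y, hvy, hyu⟩ := (hG.connected v u).exists_dist_eq_of_le hi₂.le
  have hyv : G.dist y v = i := dist_comm (G := G) ▸ hvy
  have hyA : y ∈ G.closerTo w v := by
    by_contra hy
    rw [← hG.compl_closerTo hvw, mem_compl, not_not] at hy
    have := hG.dist_eq_dist_add_dist_of_mem_closerTo hvw hwu hy
    omega
  have hyB : y ∉ G.closerTo u x := fun hy ↦ by
    have := hG.dist_eq_dist_add_dist_of_mem_closerTo hux hxv hy
    have := dist_comm (G := G) (u := u) (v := v)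
    omega
  exact mem_image.mpr ⟨y, mem_sdiff.mpr ⟨hyA, hyB⟩, hyv⟩

theorem IsTree.card_closerTo_add_le (hG : G.IsTree) (hvw : G.Adj v w)
    (hwu : G.dist w u + 1 = G.dist v u) (hux : G.Adj u x) (hxv : G.dist x v + 1 = G.dist u v) :
    #(G.closerTo u x) + (G.dist v u - 1) ≤ #(G.closerTo w v) := by
  have hsub := hG.closerTo_subset_closerTo hwu hux hxv
  have hIco := card_le_card (hG.Ico_subset_image_dist hvw hwu hux hxv)
  rw [Nat.card_Ico] at hIco
  rw [← card_sdiff_add_card_eq_card hsub]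
  have := hIco.trans card_image_le
  omega

theorem IsTree.le_sum_dist_closerTo (hG : G.IsTree) (hvw : G.Adj v w)
    (hwu : G.dist w u + 1 = G.dist v u) (hux : G.Adj u x) (hxv : G.dist x v + 1 = G.dist u v) :
    ∑ z ∈ G.closerTo u x, G.dist z u + #(G.closerTo u x) * G.dist v u +
      ∑ i ∈ range (G.dist v u), i ≤ ∑ z ∈ G.closerTo w v, G.dist z v := by
  have hsub := hG.closerTo_subset_closerTo hwu hux hxv
  have hB : ∑ z ∈ G.closerTo u x, G.dist z v =
      ∑ z ∈ G.closerTo u x, G.dist z u + #(G.closerTo u x) * G.dist v u := by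
    rw [sum_congr rfl fun z hz ↦ hG.dist_eq_dist_add_dist_of_mem_closerTo hux hxv hz,
      sum_add_distrib, sum_const, smul_eq_mul, dist_comm (u := u)]
  have hpath : ∑ i ∈ range (G.dist v u), i ≤ ∑ z ∈ G.closerTo w v \ G.closerTo u x, G.dist z v :=
    calc ∑ i ∈ range (G.dist v u), i = ∑ i ∈ Ico 1 (G.dist v u), i := by
          rcases Nat.eq_zero_or_pos (G.dist v u) with h | h
          · simp [h]
          · rw [range_eq_Ico, sum_eq_sum_Ico_succ_bot h, zero_add, zero_add]
      _ ≤ ∑ i ∈ (G.closerTo w v \ G.closerTo u x).image (G.dist · v), i :=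
          sum_le_sum_of_subset (hG.Ico_subset_image_dist hvw hwu hux hxv)
      _ ≤ _ := sum_image_le_of_nonneg fun _ _ ↦ Nat.zero_le _
  rw [← sum_sdiff hsub, ← hB]
  omega

end Geodesic

theorem IsTree.eight_mul_dist_add_one_le_card (hG : G.IsTree) (hodd : Odd (Fintype.card V))
    {v u : V} (hv : ∀ y, ww G v ≤ ww G y) (hu : ∀ y, wW G u ≤ wW G y) :
    8 * G.dist v u + 1 ≤ Fintype.card V := by
  rcases Nat.eq_zero_or_pos (G.dist v u) with hk | hk
  · rw [hk]
    exact Fintype.card_pos_iff.mpr ⟨v⟩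
  obtain ⟨w, hvw, hwu⟩ := (hG.connected v u).exists_dist_eq_of_le hk
  obtain ⟨x, hvx, hxu⟩ := (hG.connected v u).exists_dist_eq_of_le (Nat.sub_le (G.dist v u) 1)
  replace hvw : G.Adj v w := dist_eq_one_iff_adj.mp hvw
  have hux : G.Adj u x := (dist_eq_one_iff_adj.mp (by omega)).symm
  replace hwu : G.dist w u + 1 = G.dist v u := by omega
  have hxv : G.dist x v + 1 = G.dist u v := by
    rw [dist_comm, dist_comm (u := u)]
    omega
  have hcard := card_add_card_compl (G.closerTo w v)
  rw [hG.compl_closerTo hvw.symm] at hcard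
  have hbranch := hG.card_closerTo_add_le hvw hwu hux hxv
  have hlower := hG.le_sum_dist_closerTo hvw hwu hux hxv
  have hupper := hG.sum_dist_closerTo_le_of_isMin hvw hv
  have hpos := hG.connected.card_le_sum_dist_add_one (G.closerTo u x) u
  exact eight_mul_add_one_le_of_branch_bounds hodd hk (sum_range_id_mul_two _)
    (by simpa using sum_range_id_mul_two (#(G.closerTo v w) + 1))
    (hG.card_le_two_mul_card_closerTo hux hu) (by omega) (by omega)

end SimpleGraph

theorem stmt6 {V : Type*} [Fintype V] (T : SimpleGraph V) (hT : T.IsTree)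
    (hodd : Odd (Fintype.card V)) :
    ∃ v u : V, (∀ x, ww T v ≤ ww T x) ∧ (∀ x, wW T u ≤ wW T x) ∧
      T.dist v u ≤ (Fintype.card V - 1) / 8 := by
  have := hT.connected.nonempty
  obtain ⟨v, hv⟩ := Finite.exists_min (ww T)
  obtain ⟨u, hu⟩ := Finite.exists_min (wW T)
  have := hT.eight_mul_dist_add_one_le_card hodd hv hu
  exact ⟨v, u, hv, hu, by omega⟩
end

section
/- Let T be a tree on n vertices, u a leaf with neighbor u₁, and suppose the path u = u₀, u₁, …, u_r = w to a leaf w has all internal vertices u₂, …, u_{r−1} of degree 2. Let T_B be the component of T minus the path edges containing u₁. Then ww_T(u) = ww_T(u₁) + 2[w_{T_B}(u₁) + r(r−1)/2 + n − 2]. -/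
/-!
Since `u` is a leaf, every walk leaving it passes through `u₁`, so `d(u, q) = d(u₁, q) + 1` for
all `q ≠ u`; expanding `(d + 1)² + (d + 1)` gives `ww(u) = ww(u₁) + 2 (Σ_q d(u₁, q) + n - 3)`.
The vertices `u₀, u₂, …, u_r` have all their edges on the path, so they are exactly the vertices
outside `T_B`. Distances inside the subtree `T_B` are distances in `T`, and the path vertices
contribute `Σ_i d(u₁, u_i) = 1 + (0 + 1 + ⋯ + (r - 1)) = 1 + r(r - 1)/2`.
-/

open Finset
open scoped Classical

namespace SimpleGraph

variable {V : Type*} {G : SimpleGraph V}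

theorem IsAcyclic.dist_eq_length (hG : G.IsAcyclic) {a b : V} {p : G.Walk a b}
    (hp : p.IsPath) : G.dist a b = p.length := by
  obtain ⟨q, hq, hql⟩ := p.reachable.exists_path_of_dist
  rw [← hql, congrArg (fun r : G.Path a b ↦ r.1.length)
    ((hG.subsingleton_path a b).elim ⟨p, hp⟩ ⟨q, hq⟩)]

theorem IsAcyclic.dist_eq_dist_of_le {H : SimpleGraph V} (hG : G.IsAcyclic) (hHG : H ≤ G)
    {a b : V} (hab : H.Reachable a b) : G.dist a b = H.dist a b := by
  obtain ⟨q, hq, hql⟩ := hab.exists_path_of_dist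
  rw [hG.dist_eq_length (hq.mapLe hHG), Walk.length_mapLe, hql]

theorem IsAcyclic.dist_getVert_of_isPath (hG : G.IsAcyclic) {a b : V} {p : G.Walk a b}
    (hp : p.IsPath) {i : ℕ} (hi : i ≤ p.length) : G.dist a (p.getVert i) = i := by
  rw [hG.dist_eq_length (hp.take i), Walk.take_length, min_eq_left hi]

theorem Reachable.mem_of_forall_adj_mem {S : Set V} {a b : V} (hab : G.Reachable a b)
    (ha : a ∈ S) (hS : ∀ x y, x ∈ S → G.Adj x y → y ∈ S) : b ∈ S := by
  obtain ⟨q⟩ := hab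
  induction q with
  | nil => exact ha
  | cons hxy _ ih => exact ih (hS _ _ ha hxy)

theorem not_reachable_deleteEdges_of_forall_adj_mem {s : Set (Sym2 V)} {x y : V}
    (hx : ∀ z, G.Adj x z → s(x, z) ∈ s) (hyx : y ≠ x) : ¬ (G.deleteEdges s).Reachable y x := by
  rintro ⟨q⟩
  have hadj := q.reverse.adj_snd (Walk.not_nil_of_ne hyx.symm)
  rw [deleteEdges_adj] at hadj
  exact hadj.2 (hx _ hadj.1)

theorem Walk.adj_getVert_one {u w : V} {p : G.Walk u w} (hlen : 0 < p.length) :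
    G.Adj u (p.getVert 1) := by
  simpa using p.adj_getVert_succ hlen

section

variable [Fintype V] [DecidableRel G.Adj]

theorem mem_of_adj_of_degree_le_card {s : Finset V} {x z : V} (hs : ∀ y ∈ s, G.Adj x y)
    (hdeg : G.degree x ≤ s.card) (hz : G.Adj x z) : z ∈ s := by
  have hsub : s ⊆ G.neighborFinset x := fun y hy ↦ (G.mem_neighborFinset x y).2 (hs y hy)
  rw [eq_of_subset_of_card_le hsub hdeg]
  exact (G.mem_neighborFinset x z).2 hz

theorem eq_of_adj_of_degree_eq_one {x y z : V} (hx : G.degree x = 1) (hy : G.Adj x y)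
    (hz : G.Adj x z) : z = y :=
  mem_singleton.1 <| mem_of_adj_of_degree_le_card (by simpa using hy) (by simp [hx]) hz

theorem Connected.dist_eq_dist_add_one_of_degree_eq_one (hG : G.Connected) {u v q : V}
    (hu : G.degree u = 1) (huv : G.Adj u v) (hq : q ≠ u) : G.dist u q = G.dist v q + 1 := by
  obtain ⟨W, hW⟩ := (hG u q).exists_walk_length_eq_dist
  have hW0 : ¬ W.Nil := Walk.not_nil_of_ne hq.symm
  have hsnd : W.snd = v := eq_of_adj_of_degree_eq_one hu huv (W.adj_snd hW0)
  have hle : G.dist v q ≤ W.tail.length := hsnd ▸ dist_le W.tail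
  have htri : G.dist u q ≤ G.dist u v + G.dist v q := hG.dist_triangle
  rw [dist_eq_one_iff_adj.2 huv] at htri
  have := Walk.length_tail_add_one hW0
  omega

theorem Connected.ww_add_six_of_degree_eq_one (hG : G.Connected) {u v : V}
    (hu : G.degree u = 1) (huv : G.Adj u v) :
    ww G u + 6 = ww G v + 2 * ∑ q, G.dist v q + 2 * Fintype.card V := by
  have hpoint : ∀ q, (G.dist q u ^ 2 + G.dist q u) + (if q = u then 6 else 0)
      = (G.dist q v ^ 2 + G.dist q v) + 2 * G.dist v q + 2 := by
    intro q
    split_ifs with hq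
    · subst hq
      rw [dist_self, dist_eq_one_iff_adj.2 huv.symm, dist_eq_one_iff_adj.2 huv]
      rfl
    · rw [dist_comm, hG.dist_eq_dist_add_one_of_degree_eq_one hu huv hq, dist_comm (u := q)]
      ring
  calc ww G u + 6 = ∑ q, ((G.dist q u ^ 2 + G.dist q u) + if q = u then 6 else 0) := by
        rw [sum_add_distrib, sum_ite_eq' univ u, if_pos (mem_univ u), ww]
    _ = ww G v + 2 * ∑ q, G.dist v q + 2 * Fintype.card V := by
        simp only [hpoint, sum_add_distrib, ← mul_sum, sum_const, card_univ, smul_eq_mul, ww]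
        ring

variable {u w : V} {p : G.Walk u w}

theorem Walk.sum_range_dist_getVert_one (hG : G.IsTree) (hp : p.IsPath) (hu : G.degree u = 1)
    (hlen : 0 < p.length) :
    ∑ i ∈ range (p.length + 1), G.dist (p.getVert 1) (p.getVert i)
      = ∑ i ∈ range p.length, i + 1 := by
  rw [sum_range_succ', p.getVert_zero, dist_comm, dist_eq_one_iff_adj.2 (p.adj_getVert_one hlen)]
  refine congrArg (· + 1) (sum_congr rfl fun i hi ↦ ?_)
  have hi : i + 1 ≤ p.length := mem_range.1 hi
  have hne : p.getVert (i + 1) ≠ u := fun h ↦ by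
    have := hp.getVert_injOn hi (Nat.zero_le _) (h.trans p.getVert_zero.symm)
    omega
  have := hG.connected.dist_eq_dist_add_one_of_degree_eq_one hu (p.adj_getVert_one hlen) hne
  rw [hG.isAcyclic.dist_getVert_of_isPath hp hi] at this
  omega

variable (hp : p.IsPath) (hu : G.degree u = 1) (hw : G.degree w = 1)
  (hdeg : ∀ i, 2 ≤ i → i ≤ p.length - 1 → G.degree (p.getVert i) = 2) (hlen : 0 < p.length)
include hp hu hw hdeg hlen

theorem Walk.mk_getVert_mem_edges_of_adj {i : ℕ} (hi : i ≤ p.length) (hi1 : i ≠ 1) {z : V}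
    (hz : G.Adj (p.getVert i) z) : s(p.getVert i, z) ∈ p.edges := by
  have hsucc : ∀ j < p.length, s(p.getVert j, p.getVert (j + 1)) ∈ p.edges :=
    fun j hj ↦ p.mk_mem_edges_iff_exists.2 ⟨j, hj, rfl⟩
  have hpred : ∀ j, 0 < j → j ≤ p.length →
      G.Adj (p.getVert j) (p.getVert (j - 1)) ∧ s(p.getVert j, p.getVert (j - 1)) ∈ p.edges := by
    intro j hj0 hj
    have hadj := p.adj_getVert_succ (i := j - 1) (by omega)
    have hmem := hsucc (j - 1) (by omega)
    rw [Nat.sub_add_cancel hj0] at hadj hmem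
    exact ⟨hadj.symm, Sym2.eq_swap ▸ hmem⟩
  obtain rfl | rfl | ⟨hi2, hir⟩ : i = 0 ∨ i = p.length ∨ 2 ≤ i ∧ i < p.length := by omega
  · rw [← p.getVert_zero] at hu
    rw [eq_of_adj_of_degree_eq_one hu (p.adj_getVert_succ hlen) hz]
    exact hsucc 0 hlen
  · rw [← p.getVert_length] at hw
    obtain ⟨hadj, hmem⟩ := hpred p.length hlen le_rfl
    rwa [eq_of_adj_of_degree_eq_one hw hadj hz]
  · have hne : p.getVert (i - 1) ≠ p.getVert (i + 1) := fun h ↦ by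
      have := hp.getVert_injOn (show i - 1 ≤ p.length by omega)
        (show i + 1 ≤ p.length by omega) h
      omega
    have hmem := mem_of_adj_of_degree_le_card (s := {p.getVert (i - 1), p.getVert (i + 1)})
      (by simpa using ⟨(hpred i (by omega) hir.le).1, p.adj_getVert_succ hir⟩)
      (by rw [hdeg i hi2 (by omega), card_pair hne]) hz
    rcases mem_insert.1 hmem with rfl | hz
    · exact (hpred i (by omega) hir.le).2
    · rw [mem_singleton.1 hz]
      exact hsucc i hir

theorem Walk.not_reachable_deleteEdges_getVert {i : ℕ} (hi : i ≤ p.length) (hi1 : i ≠ 1) :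
    ¬ (G.deleteEdges {e | e ∈ p.edges}).Reachable (p.getVert 1) (p.getVert i) :=
  not_reachable_deleteEdges_of_forall_adj_mem
    (fun _ ↦ p.mk_getVert_mem_edges_of_adj hp hu hw hdeg hlen hi hi1)
    fun h ↦ hi1 (hp.getVert_injOn hi (show 1 ≤ p.length from hlen) h.symm)

theorem Walk.reachable_deleteEdges_or_mem_support (hG : G.Connected) (q : V) :
    (G.deleteEdges {e | e ∈ p.edges}).Reachable (p.getVert 1) q ∨ q ∈ p.support := by
  refine (hG (p.getVert 1) q).mem_of_forall_adj_mem (S := {q | _ ∨ _}) (Or.inl .rfl) ?_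
  rintro x y hx hxy
  by_cases hxy' : s(x, y) ∈ p.edges
  · exact Or.inr (p.snd_mem_support_of_mem_edges hxy')
  have hx' : (G.deleteEdges {e | e ∈ p.edges}).Reachable (p.getVert 1) x := by
    refine hx.elim id fun hx ↦ ?_
    obtain ⟨i, rfl, hi⟩ := Walk.mem_support_iff_exists_getVert.1 hx
    rcases eq_or_ne i 1 with rfl | hi1
    · exact .rfl
    · exact absurd (p.mk_getVert_mem_edges_of_adj hp hu hw hdeg hlen hi hi1 hxy) hxy'
  exact Or.inl (hx'.trans ((deleteEdges_adj ..).2 ⟨hxy, hxy'⟩).reachable)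

theorem Walk.sum_dist_getVert_one (hG : G.IsTree) :
    ∑ q, G.dist (p.getVert 1) q
      = ∑ q ∈ univ.filter (fun q ↦ (G.deleteEdges {e | e ∈ p.edges}).Reachable (p.getVert 1) q),
          (G.deleteEdges {e | e ∈ p.edges}).dist (p.getVert 1) q
        + ∑ i ∈ range (p.length + 1), G.dist (p.getVert 1) (p.getVert i) := by
  set T' := G.deleteEdges {e | e ∈ p.edges}
  set R := univ.filter (fun q ↦ T'.Reachable (p.getVert 1) q)
  set P := (range (p.length + 1)).image p.getVert
  have hunion : R ∪ P = univ := eq_univ_of_forall fun q ↦ by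
    rcases p.reachable_deleteEdges_or_mem_support hp hu hw hdeg hlen hG.connected q with hq | hq
    · exact mem_union_left _ (mem_filter.2 ⟨mem_univ q, hq⟩)
    · obtain ⟨i, rfl, hi⟩ := Walk.mem_support_iff_exists_getVert.1 hq
      exact mem_union_right _ (mem_image_of_mem _ (mem_range.2 (Nat.lt_succ_of_le hi)))
  have hinter : ∑ q ∈ R ∩ P, G.dist (p.getVert 1) q = 0 := sum_eq_zero fun q hq ↦ by
    obtain ⟨hqR, hqP⟩ := mem_inter.1 hq
    obtain ⟨i, hi, rfl⟩ := mem_image.1 hqP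
    rcases eq_or_ne i 1 with rfl | hi1
    · exact dist_self
    · exact absurd (mem_filter.1 hqR).2 (p.not_reachable_deleteEdges_getVert hp hu hw hdeg hlen
        (Nat.le_of_lt_succ (mem_range.1 hi)) hi1)
  have hR : ∑ q ∈ R, G.dist (p.getVert 1) q = ∑ q ∈ R, T'.dist (p.getVert 1) q :=
    sum_congr rfl fun q hq ↦
      hG.isAcyclic.dist_eq_dist_of_le (deleteEdges_le _) (mem_filter.1 hq).2
  have hP : ∑ q ∈ P, G.dist (p.getVert 1) q
      = ∑ i ∈ range (p.length + 1), G.dist (p.getVert 1) (p.getVert i) :=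
    sum_image fun i hi j hj ↦ hp.getVert_injOn (Nat.le_of_lt_succ (mem_range.1 hi))
      (Nat.le_of_lt_succ (mem_range.1 hj))
  rw [← hR, ← hP, ← sum_union_inter, hunion, hinter, add_zero]

end

end SimpleGraph

theorem stmt10 {V : Type*} [Fintype V] (T : SimpleGraph V) (hT : T.IsTree)
    (u w : V) (hu : T.degree u = 1) (hw : T.degree w = 1)
    (p : T.Walk u w) (hp : p.IsPath) (hr : 2 ≤ p.length)
    (hdeg : ∀ i, 2 ≤ i → i ≤ p.length - 1 → T.degree (p.getVert i) = 2) :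
    (ww T u : ℤ) = ww T (p.getVert 1)
      + 2 * (((∑ q ∈ Finset.univ.filter
                (fun q => (T.deleteEdges {e | e ∈ p.edges}).Reachable (p.getVert 1) q),
                (T.deleteEdges {e | e ∈ p.edges}).dist (p.getVert 1) q : ℕ) : ℤ)
             + (p.length : ℤ) * ((p.length : ℤ) - 1) / 2
             + (Fintype.card V : ℤ) - 2) := by
  have hlen : 0 < p.length := by omega
  have hww := hT.connected.ww_add_six_of_degree_eq_one hu (p.adj_getVert_one hlen)
  rw [p.sum_dist_getVert_one hp hu hw hdeg hlen hT,
    p.sum_range_dist_getVert_one hT hp hu hlen] at hww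
  have hgauss := sum_range_id_mul_two p.length
  zify [show 1 ≤ p.length by omega] at hgauss hww
  push_cast at hww ⊢
  omega
end

section
/- Let T be a tree and P a path in T between two leaves. Then the function i ↦ ww_T(p_i) along the vertices p_0, p_1, …, p_r of P is strictly convex, i.e., ww_T(p_{i+1}) − ww_T(p_i) is strictly increasing in i. -/
/-!
Fix a vertex `u` and three consecutive vertices `x, y, z` of the path. In a tree the distance to
`u` changes by exactly one along every edge, and `y` has only one neighbour closer to `u` (the next
vertex of the unique `y`–`u` path), so `d(u, ·)` cannot decrease on both sides of `y`. Hence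
`(d(u,x), d(u,y), d(u,z))` is `(d-1, d, d+1)`, `(d+1, d, d-1)` or `(d+1, d, d+1)`, and the strictly
convex increasing function `t ↦ t² + t` gives `2 f(d(u,y)) < f(d(u,x)) + f(d(u,z))`. Summing over
`u` yields the claim.
-/

open Finset
open scoped Classical

namespace SimpleGraph

variable {V : Type*} {G : SimpleGraph V}

lemma IsAcyclic.eq_of_adj_of_dist_add_one_eq (hG : G.IsAcyclic) {u x y z : V}
    (hxy : G.Adj x y) (hzy : G.Adj z y) (hux : G.Reachable u x)
    (hx : G.dist u x + 1 = G.dist u y) (hz : G.dist u z + 1 = G.dist u y) : x = z := by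
  have huz : G.Reachable u z := hux.trans (hxy.reachable.trans hzy.symm.reachable)
  obtain ⟨p, hp⟩ := hux.exists_walk_length_eq_dist
  obtain ⟨q, hq⟩ := huz.exists_walk_length_eq_dist
  have hpy : (p.concat hxy).IsPath :=
    Walk.isPath_of_length_eq_dist _ (by rw [Walk.length_concat, hp, hx])
  have hqy : (q.concat hzy).IsPath :=
    Walk.isPath_of_length_eq_dist _ (by rw [Walk.length_concat, hq, hz])
  have hpq : p.concat hxy = q.concat hzy :=
    Subtype.mk.inj <| (hG.subsingleton_path u y).elim ⟨_, hpy⟩ ⟨_, hqy⟩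
  simpa using congr_arg Walk.penultimate hpq

lemma IsTree.two_mul_dist_sq_add_dist_lt (hG : G.IsTree) (u : V) {x y z : V}
    (hxy : G.Adj x y) (hyz : G.Adj y z) (hxz : x ≠ z) :
    2 * (G.dist u y ^ 2 + G.dist u y) <
      (G.dist u x ^ 2 + G.dist u x) + (G.dist u z ^ 2 + G.dist u z) := by
  have hpeak : ¬(G.dist u x + 1 = G.dist u y ∧ G.dist u z + 1 = G.dist u y) := fun ⟨hx, hz⟩ =>
    hxz (hG.isAcyclic.eq_of_adj_of_dist_add_one_eq hxy hyz.symm (hG.connected u x) hx hz)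
  rcases hG.dist_eq_dist_add_one_of_adj u hxy with hx | hx <;>
    rcases hG.dist_eq_dist_add_one_of_adj u hyz with hz | hz
  · nlinarith
  · nlinarith
  · exact absurd ⟨hx.symm, hz.symm⟩ hpeak
  · nlinarith

lemma IsTree.two_mul_ww_lt [Fintype V] (hG : G.IsTree) {x y z : V}
    (hxy : G.Adj x y) (hyz : G.Adj y z) (hxz : x ≠ z) :
    2 * ww G y < ww G x + ww G z := by
  have : Nonempty V := hG.connected.nonempty
  rw [ww, ww, ww, mul_sum, ← sum_add_distrib]
  exact sum_lt_sum_of_nonempty univ_nonempty fun u _ =>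
    hG.two_mul_dist_sq_add_dist_lt u hxy hyz hxz

end SimpleGraph

theorem stmt18_general {V : Type*} [Fintype V] (T : SimpleGraph V) (hT : T.IsTree)
    (a b : V)
    (p : T.Walk a b) (hp : p.IsPath) :
    ∀ i, 1 ≤ i → i ≤ p.length - 1 →
      2 * ww T (p.getVert i) < ww T (p.getVert (i - 1)) + ww T (p.getVert (i + 1)) := by
  intro i hi hil
  have hprev : T.Adj (p.getVert (i - 1)) (p.getVert i) := by
    simpa [Nat.sub_add_cancel hi] using p.adj_getVert_succ (i := i - 1) (by omega)
  have hnext : T.Adj (p.getVert i) (p.getVert (i + 1)) := p.adj_getVert_succ (by omega)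
  have hne : p.getVert (i - 1) ≠ p.getVert (i + 1) := fun h => by
    have := hp.getVert_injOn (by simp only [Set.mem_ofPred_eq]; omega)
      (by simp only [Set.mem_ofPred_eq]; omega) h
    omega
  exact hT.two_mul_ww_lt hprev hnext hne

theorem stmt18 {V : Type*} [Fintype V] (T : SimpleGraph V) (hT : T.IsTree)
    (a b : V) (ha : T.degree a = 1) (hb : T.degree b = 1)
    (p : T.Walk a b) (hp : p.IsPath) :
    ∀ i, 1 ≤ i → i ≤ p.length - 1 →
      2 * ww T (p.getVert i) < ww T (p.getVert (i - 1)) + ww T (p.getVert (i + 1)) :=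
  stmt18_general T hT a b p hp
end
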